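/- arXiv:1606.06911 — 2 statements merged into one kernel-verified Lean document; each statement's English description precedes it below -/
import Mathlib

section
/- Let M be an n×n complex Hermitian matrix all of whose off-diagonal entries are nonnegative real numbers. Then every entry of the matrix exponential exp(M) is a nonnegative real number. -/
open scoped ComplexOrder
open Matrix

/-- A function `f : ℝ → ℝ` is *exponentially convex* if it is continuous, nonnegative,
and for every `N`, all reals `t 1, …, t N` and complex numbers `ξ 1, …, ξ N`, the sum
`∑_{r,s} f (t r + t s) * ξ r * conj (ξ s)` is a nonnegative real number. -/
def ExponentiallyConvex (f : ℝ → ℝ) : Prop :=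
  Continuous f ∧ (∀ t : ℝ, 0 ≤ f t) ∧
    ∀ (N : ℕ) (t : Fin N → ℝ) (ξ : Fin N → ℂ),
      0 ≤ ∑ r : Fin N, ∑ s : Fin N, (f (t r + t s) : ℂ) * ξ r * (starRingEnd ℂ) (ξ s)

/-! Since the diagonal of a Hermitian matrix is real, adding a large real multiple `c` of the
identity makes every entry of `M` nonnegative. The exponential of a matrix with nonnegative
entries is a limit of sums of such matrices, hence entrywise nonnegative, and since `c • 1` is
central, `exp M = exp (-c) • exp (M + c • 1)` with `exp (-c) > 0`. -/

theorem RCLike.exp_ofReal_nonneg {𝕂 : Type*} [RCLike 𝕂] (r : ℝ) :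
    0 ≤ NormedSpace.exp (r : 𝕂) := by
  rw [← RCLike.algebraMap_eq_ofReal,
    ← NormedSpace.map_exp (algebraMap ℝ 𝕂) (continuous_algebraMap ℝ 𝕂),
    RCLike.algebraMap_eq_ofReal, RCLike.ofReal_nonneg, ← Real.exp_eq_exp_ℝ]
  exact (Real.exp_pos r).le

namespace Matrix

variable {ι 𝕂 : Type*} [Fintype ι] [DecidableEq ι] [RCLike 𝕂]

open scoped Norms.Operator in
theorem exp_apply_nonneg {A : Matrix ι ι 𝕂} (hA : ∀ i j, 0 ≤ A i j) (i j : ι) :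
    0 ≤ NormedSpace.exp A i j := by
  have hsum := Pi.hasSum.1 (Pi.hasSum.1 (NormedSpace.exp_series_hasSum_exp' (𝕂 := 𝕂) A) i) j
  refine hsum.nonneg fun k => ?_
  simp only [Matrix.smul_apply, smul_eq_mul]
  exact mul_nonneg (by positivity) (pow_apply_nonneg hA k i j)

theorem exp_add_smul_one (A : Matrix ι ι 𝕂) (c : 𝕂) :
    NormedSpace.exp (A + c • 1) = NormedSpace.exp c • NormedSpace.exp A := by
  have hc : NormedSpace.exp (c • 1 : Matrix ι ι 𝕂) = NormedSpace.exp c • 1 := by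
    rw [smul_one_eq_diagonal, smul_one_eq_diagonal, exp_diagonal, Pi.exp_def]
  rw [exp_add_of_commute _ _ ((Commute.one_right A).smul_right c), hc, mul_smul_one]

theorem exists_nonneg_add_smul_one {M : Matrix ι ι 𝕂} (hdiag : ∀ i, IsSelfAdjoint (M i i))
    (hoff : ∀ i j, i ≠ j → 0 ≤ M i j) : ∃ c : ℝ, ∀ i j, 0 ≤ (M + (c : 𝕂) • 1) i j := by
  refine ⟨∑ k, ‖M k k‖, fun i j => ?_⟩
  rcases eq_or_ne i j with rfl | hij
  · have hre : (RCLike.re (M i i) : 𝕂) = M i i := RCLike.conj_eq_iff_re.1 (hdiag i)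
    have hle : ‖M i i‖ ≤ ∑ k, ‖M k k‖ :=
      Finset.single_le_sum (fun k _ => norm_nonneg (M k k)) (Finset.mem_univ i)
    rw [add_apply, smul_apply, one_apply_eq, smul_eq_mul, mul_one, ← hre, ← RCLike.ofReal_add,
      RCLike.ofReal_nonneg]
    linarith [neg_abs_le (RCLike.re (M i i)), RCLike.abs_re_le_norm (M i i)]
  · simpa [one_apply_ne hij] using hoff i j hij

end Matrix

theorem exp_entries_nonneg (n : ℕ) (M : Matrix (Fin n) (Fin n) ℂ) (hM : M.IsHermitian)
    (hoff : ∀ i j : Fin n, i ≠ j → 0 ≤ M i j) :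
    ∀ i j : Fin n, 0 ≤ NormedSpace.exp M i j := by
  intro i j
  obtain ⟨c, hc⟩ := exists_nonneg_add_smul_one (fun k => hM.apply k k) hoff
  have hshift : M = (M + (c : ℂ) • 1) + ((-c : ℝ) : ℂ) • 1 := by
    rw [Complex.ofReal_neg, neg_smul, add_neg_cancel_right]
  rw [hshift, exp_add_smul_one, Matrix.smul_apply, smul_eq_mul]
  exact mul_nonneg (RCLike.exp_ofReal_nonneg (-c)) (exp_apply_nonneg hc i j)
end

section
/- If f : ℝ → ℝ is exponentially convex, then either f(t) = 0 for every real t, or f(t) > 0 for every real t. -/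
open scoped ComplexOrder

/-! The Gram matrix `(f (t r + t s))` of the two points `u, v` is positive semidefinite, so its
determinant is nonnegative: `f (u + v)² ≤ f (2u) f (2v)`. If `f s = 0`, taking `u = s / 2` and
`v = t - s / 2` gives `f t = 0` for every `t`. -/

namespace ExponentiallyConvex

variable {f : ℝ → ℝ}

theorem quadratic_nonneg (hf : ExponentiallyConvex f) (u v x : ℝ) :
    0 ≤ f (u + u) * (x * x) + 2 * f (u + v) * x + f (v + v) := by
  have h := hf.2.2 2 ![u, v] ![(x : ℂ), 1]
  simp only [Fin.sum_univ_two, Matrix.cons_val_zero, Matrix.cons_val_one, map_one, mul_one,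
    Complex.conj_ofReal, add_comm v u] at h
  rw [← Complex.zero_le_real]
  convert h using 1
  push_cast
  ring

theorem sq_le_mul (hf : ExponentiallyConvex f) (u v : ℝ) :
    f (u + v) ^ 2 ≤ f (u + u) * f (v + v) := by
  have h := discrim_le_zero (hf.quadratic_nonneg u v)
  rw [discrim] at h
  linarith

theorem eq_zero_of_eq_zero (hf : ExponentiallyConvex f) {s : ℝ} (hs : f s = 0) (t : ℝ) :
    f t = 0 := by
  have h := hf.sq_le_mul (s / 2) (t - s / 2)
  rw [show s / 2 + s / 2 = s by ring, show s / 2 + (t - s / 2) = t by ring, hs, zero_mul] at h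
  exact pow_eq_zero_iff two_ne_zero |>.mp (le_antisymm h (sq_nonneg _))

end ExponentiallyConvex

theorem expConvex_zero_or_pos (f : ℝ → ℝ) (hf : ExponentiallyConvex f) :
    (∀ t : ℝ, f t = 0) ∨ (∀ t : ℝ, 0 < f t) := by
  rcases em (∃ s, f s = 0) with ⟨s, hs⟩ | hz
  · exact Or.inl (hf.eq_zero_of_eq_zero hs)
  · exact Or.inr fun t => (hf.2.1 t).lt_of_ne fun h => hz ⟨t, h.symm⟩
end
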